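/- arXiv:0903.0241 — 2 statements merged into one kernel-verified Lean document; each statement's English description precedes it below -/
import Mathlib

section
/- Let R > 1 and let λ > 0 be a real number. Let g be a holomorphic function on the annulus K_R = {z ∈ ℂ : 1/R < |z| < R} with g(z) ≠ 0 for all z ∈ K_R, and assume (1/(2π)) ∫₀^{2π} (1/g(e^{it})) dt = −λ. Then for every ρ with 1/R < ρ < R there exists t₂ ∈ [0, 2π] such that |g(ρ e^{it₂}) + 1/(2λ)| = 1/(2λ); equivalently, writing g(ρ e^{it₂}) = x + iy, one has x² + y² + x/λ = 0. In particular, the image curve γ_ρ = g(C_ρ) of each concentric circle C_ρ = {z : |z| = ρ} meets the circle L₂ = {z ∈ ℂ : |z + 1/(2λ)| = 1/(2λ)}. -/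
/-!
By Cauchy's theorem on annuli, the circle average of the holomorphic function `1/g` over
`|z| = ρ` does not depend on `ρ`, so it equals `a₀[1/g] = -λ` for every `ρ`. By the mean value
theorem for integrals, the continuous function `t ↦ Re (1/g(ρ e^{it}))` then takes its mean
value `-λ` at some `t₂`, and `Re (1/w) = -λ` says exactly that `w` lies on the circle `L₂`.
-/

/-- The annulus `K_R = {z : 1/R < |z| < R}`. -/
def annulus (R : ℝ) : Set ℂ := {z : ℂ | 1 / R < ‖z‖ ∧ ‖z‖ < R}

open Complex Metric Real Set

section CircleAverage

variable {E : Type*} [NormedAddCommGroup E] [NormedSpace ℂ E]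

theorem circleAverage_eq_of_differentiableOn_annulus {c : ℂ} {r R : ℝ} (h0 : 0 < r)
    (hle : r ≤ R) {f : ℂ → E} (hf : DifferentiableOn ℂ f (closedBall c R \ ball c r)) :
    circleAverage f c R = circleAverage f c r := by
  rw [circleAverage_eq_circleIntegral (h0.trans_le hle).ne',
    circleAverage_eq_circleIntegral h0.ne',
    circleIntegral_sub_center_inv_smul_eq_of_differentiable_on_annulus_off_countable h0 hle
      countable_empty hf.continuousOn fun z hz => hf.differentiableAt ?_]
  exact Filter.mem_of_superset ((isOpen_ball.sdiff isClosed_closedBall).mem_nhds hz.1)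
    (sdiff_subset_sdiff ball_subset_closedBall ball_subset_closedBall)

theorem closedBall_sdiff_ball_subset_annulus {R r r' : ℝ} (hr : 1 / R < r) (hr' : r' < R) :
    closedBall (0 : ℂ) r' \ ball 0 r ⊆ annulus R := by
  rintro z ⟨hz, hz'⟩
  rw [mem_closedBall_zero_iff] at hz
  rw [mem_ball_zero_iff, not_lt] at hz'
  exact ⟨hr.trans_le hz', hz.trans_lt hr'⟩

theorem circleAverage_eq_circleAverage_one_of_differentiableOn_annulus {R ρ : ℝ} (hR : 1 < R)
    {f : ℂ → E} (hf : DifferentiableOn ℂ f (annulus R)) (hρ₁ : 1 / R < ρ) (hρ₂ : ρ < R) :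
    circleAverage f 0 ρ = circleAverage f 0 1 := by
  have hR' : 1 / R < 1 := (div_lt_one (one_pos.trans hR)).2 hR
  have hρ : 0 < ρ := (one_div_pos.2 (one_pos.trans hR)).trans hρ₁
  rcases le_total ρ 1 with h | h
  · exact (circleAverage_eq_of_differentiableOn_annulus hρ h
      (hf.mono (closedBall_sdiff_ball_subset_annulus hρ₁ hR))).symm
  · exact circleAverage_eq_of_differentiableOn_annulus one_pos h
      (hf.mono (closedBall_sdiff_ball_subset_annulus hR' hρ₂))

end CircleAverage

theorem exists_circleMap_eq_circleAverage {u : ℂ → ℝ} {c : ℂ} {R : ℝ}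
    (hu : ContinuousOn u (sphere c |R|)) :
    ∃ θ ∈ Icc 0 (2 * π), u (circleMap c R θ) = circleAverage u c R := by
  have hcont : Continuous (u ∘ circleMap c R) :=
    hu.comp_continuous (continuous_circleMap c R) (circleMap_mem_sphere' c R)
  obtain ⟨θ, hθ, h⟩ := exists_eq_interval_average two_pi_pos.ne hcont.continuousOn
  rw [uIoo_of_le two_pi_pos.le] at hθ
  exact ⟨θ, Ioo_subset_Icc_self hθ, by rw [circleAverage_eq_intervalAverage]; exact h⟩

namespace Complex

theorem re_sq_add_im_sq_add_re_div_eq_zero_of_re_inv_eq {w : ℂ} {l : ℝ} (hl : l ≠ 0)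
    (h : (w⁻¹).re = -l) : w.re ^ 2 + w.im ^ 2 + w.re / l = 0 := by
  have hw : normSq w ≠ 0 := by
    rintro hw
    rw [inv_re, hw, div_zero] at h
    exact hl (neg_eq_zero.1 h.symm)
  rw [inv_re, div_eq_iff hw, normSq_apply] at h
  field_simp
  linear_combination h

theorem norm_add_inv_two_mul_eq_of_re_sq_add_im_sq_add_re_div_eq_zero {w : ℂ} {l : ℝ}
    (hl : 0 < l) (h : w.re ^ 2 + w.im ^ 2 + w.re / l = 0) : ‖w + 1 / (2 * l)‖ = 1 / (2 * l) := by
  have hcast : (1 / (2 * l : ℂ)) = ((1 / (2 * l) : ℝ) : ℂ) := by push_cast; ring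
  rw [hcast, ← sq_eq_sq₀ (norm_nonneg _) (by positivity), Complex.sq_norm, normSq_apply]
  simp only [add_re, add_im, ofReal_re, ofReal_im, add_zero]
  field_simp at h ⊢
  linear_combination (4 * l) * h

end Complex

/-- Second half of relation (3) of the paper together with its geometric
interpretation (⋆): if `g` is holomorphic and zero-free on `K_R` with `a₀[1/g] = -λ`
(`λ > 0`), then the image of every concentric circle of radius `ρ ∈ (1/R, R)` meets the
circle `L₂ = {z : |z + 1/(2λ)| = 1/(2λ)}`; writing the point as `x + iy`, it satisfies
`x² + y² + x/λ = 0`. -/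
theorem image_circle_meets_L2
    (R : ℝ) (hR : 1 < R) (l : ℝ) (hl : 0 < l) (g : ℂ → ℂ)
    (hg : DifferentiableOn ℂ g (annulus R))
    (hne : ∀ z ∈ annulus R, g z ≠ 0)
    (ha0 : (1 / (2 * (Real.pi : ℂ))) *
        ∫ t in (0:ℝ)..(2 * Real.pi), (g (Complex.exp (t * Complex.I)))⁻¹ = (-l : ℂ))
    (ρ : ℝ) (hρ₁ : 1 / R < ρ) (hρ₂ : ρ < R) :
    ∃ t₂ ∈ Set.Icc (0:ℝ) (2 * Real.pi),
      ‖g (ρ * Complex.exp (t₂ * Complex.I)) + 1 / (2 * l)‖ = 1 / (2 * l) ∧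
      (g (ρ * Complex.exp (t₂ * Complex.I))).re ^ 2 +
        (g (ρ * Complex.exp (t₂ * Complex.I))).im ^ 2 +
        (g (ρ * Complex.exp (t₂ * Complex.I))).re / l = 0 := by
  set f : ℂ → ℂ := fun z => (g z)⁻¹
  have hf : DifferentiableOn ℂ f (annulus R) := hg.inv hne
  have hρ : 0 < ρ := (one_div_pos.2 (one_pos.trans hR)).trans hρ₁
  have havg_one : circleAverage f 0 1 = -l := by
    rw [circleAverage_def, ← ha0, real_smul]
    simp [circleMap_zero, f]
  have hcont : ContinuousOn f (sphere 0 |ρ|) := by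
    rw [abs_of_pos hρ, ← closedBall_sdiff_ball]
    exact hf.continuousOn.mono (closedBall_sdiff_ball_subset_annulus hρ₁ hρ₂)
  have havg : circleAverage (re ∘ f) 0 ρ = -l := by
    change circleAverage (reCLM ∘ f) 0 ρ = -l
    rw [reCLM.circleAverage_comp_comm hcont.circleIntegrable',
      circleAverage_eq_circleAverage_one_of_differentiableOn_annulus hR hf hρ₁ hρ₂, havg_one]
    simp
  obtain ⟨θ, hθ, hθ_avg⟩ :=
    exists_circleMap_eq_circleAverage (continuous_re.comp_continuousOn hcont)
  rw [havg, Function.comp_apply, circleMap_zero] at hθ_avg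
  have hquad := re_sq_add_im_sq_add_re_div_eq_zero_of_re_inv_eq hl.ne' hθ_avg
  exact ⟨θ, hθ, norm_add_inv_two_mul_eq_of_re_sq_add_im_sq_add_re_div_eq_zero hl hquad, hquad⟩
end

section
/- Let λ > 0 and set λ* = √(λ² + 1) − λ, so that 0 < λ* < 1. Let D = {z ∈ ℂ : Re z < λ and |z + 1/(2λ)| > 1/(2λ)} and define the Möbius transformation f(z) = (1/λ*) · (z + λ*)/(1 − λ* z). Then f maps D bijectively onto the annulus K₁ = {w ∈ ℂ : 1 < |w| < 1/λ*²}; in particular f is holomorphic and injective on D (its pole 1/λ* = λ + √(1 + λ²) lies outside the closure of D) and f(D) = K₁. -/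
/-!
Write `s = λ*`, so that `s² + 2λs = 1`. Using this relation, `|z + s|² - s²|1 - sz|²` equals
`2s(1 + s²)(λ|z|² + Re z)` and `|1 - sz|² - s²|z + s|²` equals `2s(1 + s²)(λ - Re z)`. Hence
`|f z| > 1` exactly outside the circle `L₂` and `|f z| < 1/s²` exactly to the left of the line
`L₁`. Bijectivity comes from the explicit inverse `w ↦ s(w - 1)/(1 + s²w)`, whose pole
`-1/s²` lies on the outer boundary circle of the annulus.
-/

open Complex

lemma sqrt_sq_add_one_sub_pos (l : ℝ) : 0 < √(l ^ 2 + 1) - l :=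
  sub_pos.2 (Real.lt_sqrt_of_sq_lt (by linarith))

lemma sqrt_sq_add_one_sub_lt_one {l : ℝ} (hl : 0 < l) : √(l ^ 2 + 1) - l < 1 := by
  have : √(l ^ 2 + 1) < l + 1 := (Real.sqrt_lt' (by linarith)).2 (by nlinarith)
  linarith

lemma sqrt_sq_add_one_sub_sq_add (l : ℝ) :
    (√(l ^ 2 + 1) - l) ^ 2 + 2 * l * (√(l ^ 2 + 1) - l) = 1 := by
  linear_combination Real.sq_sqrt (by positivity : (0 : ℝ) ≤ l ^ 2 + 1)

lemma Complex.norm_lt_norm_iff_normSq_lt {z w : ℂ} : ‖z‖ < ‖w‖ ↔ normSq z < normSq w := by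
  rw [← sq_lt_sq₀ (norm_nonneg z) (norm_nonneg w), Complex.sq_norm, Complex.sq_norm]

lemma Complex.lt_norm_add_ofReal_iff {r : ℝ} (hr : 0 ≤ r) (z : ℂ) :
    r < ‖z + r‖ ↔ 0 < normSq z + 2 * r * z.re := by
  have hr' : r = ‖(r : ℂ)‖ := by rw [norm_real, Real.norm_of_nonneg hr]
  nth_rw 1 [hr']
  rw [norm_lt_norm_iff_normSq_lt, ← sub_pos]
  simp only [normSq_apply, add_re, add_im, ofReal_re, ofReal_im]
  ring_nf

lemma one_add_sq_ofReal_ne_zero (s : ℝ) : (1 : ℂ) + (s : ℂ) ^ 2 ≠ 0 := by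
  exact_mod_cast (by positivity : (0 : ℝ) < 1 + s ^ 2).ne'

lemma Complex.one_div_two_mul_lt_norm_add_iff {l : ℝ} (hl : 0 < l) (z : ℂ) :
    1 / (2 * l) < ‖z + 1 / (2 * l)‖ ↔ 0 < l * normSq z + z.re := by
  have hcast : (1 : ℂ) / (2 * l) = ((1 / (2 * l) : ℝ) : ℂ) := by push_cast; rfl
  rw [hcast, lt_norm_add_ofReal_iff (by positivity), ← mul_pos_iff_of_pos_left hl]
  field_simp

noncomputable def moebius (s : ℝ) (z : ℂ) : ℂ := 1 / (s : ℂ) * ((z + s) / (1 - s * z))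

noncomputable def moebiusInv (s : ℝ) (w : ℂ) : ℂ := s * (w - 1) / (1 + s ^ 2 * w)

section Moebius

variable {s l : ℝ} {z w : ℂ}

lemma differentiableAt_moebius (hz : 1 - s * z ≠ 0) : DifferentiableAt ℂ (moebius s) z := by
  unfold moebius
  fun_prop (disch := exact hz)

lemma moebius_eq_div : moebius s z = (z + s) / (s * (1 - s * z)) := by
  rw [moebius, div_mul_div_comm, one_mul]

lemma moebiusInv_moebius (hs : s ≠ 0) (hz : 1 - s * z ≠ 0) : moebiusInv s (moebius s z) = z := by
  have hsC : (s : ℂ) ≠ 0 := ofReal_ne_zero.2 hs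
  rw [moebiusInv, moebius]
  field_simp
  rw [show 1 - s * z + s * (z + s) = (1 + s ^ 2 : ℂ) by ring,
    div_eq_iff (one_add_sq_ofReal_ne_zero s)]
  ring

lemma one_sub_mul_moebiusInv (hw : 1 + s ^ 2 * w ≠ 0) :
    1 - s * moebiusInv s w = (1 + s ^ 2) / (1 + s ^ 2 * w) := by
  rw [moebiusInv]
  field_simp
  ring

lemma one_sub_mul_moebiusInv_ne_zero (hw : 1 + s ^ 2 * w ≠ 0) : 1 - s * moebiusInv s w ≠ 0 := by
  rw [one_sub_mul_moebiusInv hw]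
  exact div_ne_zero (one_add_sq_ofReal_ne_zero s) hw

lemma moebius_moebiusInv (hs : s ≠ 0) (hw : 1 + s ^ 2 * w ≠ 0) :
    moebius s (moebiusInv s w) = w := by
  have hsC : (s : ℂ) ≠ 0 := ofReal_ne_zero.2 hs
  have h1s := one_add_sq_ofReal_ne_zero s
  rw [moebius, one_sub_mul_moebiusInv hw, moebiusInv]
  field_simp
  ring

lemma one_add_sq_mul_ne_zero (hs : 0 < s) (hw : ‖w‖ < 1 / s ^ 2) : 1 + s ^ 2 * w ≠ 0 := by
  intro h
  have : ‖(s : ℂ) ^ 2 * w‖ < 1 := by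
    rwa [norm_mul, norm_pow, norm_real, Real.norm_of_nonneg hs.le, ← lt_div_iff₀' (by positivity)]
  rw [eq_neg_of_add_eq_zero_right h, norm_neg, norm_one] at this
  exact this.false

variable (hkey : s ^ 2 + 2 * l * s = 1)
include hkey

lemma one_sub_mul_ne_zero_of_re_lt (hs : 0 < s) (hz : z.re < l) : 1 - s * z ≠ 0 := by
  intro h
  have := congrArg re h
  simp only [sub_re, one_re, mul_re, ofReal_re, ofReal_im, zero_mul, sub_zero, zero_re] at this
  nlinarith [mul_lt_mul_of_pos_left hz hs]

lemma one_lt_norm_moebius_iff (hs : 0 < s) (hz : 1 - s * z ≠ 0) :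
    1 < ‖moebius s z‖ ↔ 0 < l * normSq z + z.re := by
  have hsz : s * (1 - s * z) ≠ 0 := mul_ne_zero (ofReal_ne_zero.2 hs.ne') hz
  have hdiff : normSq (z + s) - normSq (s * (1 - s * z)) =
      2 * s * (1 + s ^ 2) * (l * normSq z + z.re) := by
    simp only [normSq_apply, add_re, add_im, sub_re, sub_im, mul_re, mul_im, ofReal_re, ofReal_im,
      one_re, one_im]
    linear_combination (-(1 + s ^ 2) * (z.re ^ 2 + z.im ^ 2)) * hkey
  rw [moebius_eq_div, norm_div, one_lt_div (norm_pos_iff.2 hsz), norm_lt_norm_iff_normSq_lt,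
    ← sub_pos, hdiff, mul_pos_iff_of_pos_left (by positivity)]

lemma norm_moebius_lt_iff (hs : 0 < s) (hz : 1 - s * z ≠ 0) :
    ‖moebius s z‖ < 1 / s ^ 2 ↔ z.re < l := by
  have hdiff : normSq (1 - s * z) - normSq (s * (z + s)) = 2 * s * (1 + s ^ 2) * (l - z.re) := by
    simp only [normSq_apply, add_re, add_im, sub_re, sub_im, mul_re, mul_im, ofReal_re, ofReal_im,
      one_re, one_im]
    linear_combination (-(1 + s ^ 2)) * hkey
  have hsq : (s : ℂ) ^ 2 * moebius s z = s * (z + s) / (1 - s * z) := by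
    rw [moebius]
    field_simp
  have hnorm : s ^ 2 * ‖moebius s z‖ = ‖s * (z + s) / (1 - s * z)‖ := by
    rw [← hsq, norm_mul, norm_pow, norm_real, Real.norm_of_nonneg hs.le]
  rw [lt_div_iff₀' (by positivity), hnorm, norm_div, div_lt_one (norm_pos_iff.2 hz),
    norm_lt_norm_iff_normSq_lt, ← sub_pos, hdiff, mul_pos_iff_of_pos_left (by positivity), sub_pos]

end Moebius

/-- The Möbius transformation `f(z) = (1/λ*) (z + λ*)/(1 - λ* z)` maps the doubly
connected domain `D = {z : Re z < λ, |z + 1/(2λ)| > 1/(2λ)}` bijectively onto the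
annulus `K₁ = {w : 1 < |w| < 1/λ*²}`, where `λ* = √(λ² + 1) - λ ∈ (0, 1)`;
in particular `f` is holomorphic and injective on `D`. -/
theorem moebius_maps_D_onto_annulus (l : ℝ) (hl : 0 < l) :
    0 < Real.sqrt (l ^ 2 + 1) - l ∧ Real.sqrt (l ^ 2 + 1) - l < 1 ∧
    (DifferentiableOn ℂ
      (fun z : ℂ =>
        (1 / ((Real.sqrt (l ^ 2 + 1) - l : ℝ) : ℂ)) *
          ((z + ((Real.sqrt (l ^ 2 + 1) - l : ℝ) : ℂ)) /
            (1 - ((Real.sqrt (l ^ 2 + 1) - l : ℝ) : ℂ) * z)))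
      {z : ℂ | z.re < l ∧ 1 / (2 * l) < ‖z + 1 / (2 * l)‖}) ∧
    Set.BijOn
      (fun z : ℂ =>
        (1 / ((Real.sqrt (l ^ 2 + 1) - l : ℝ) : ℂ)) *
          ((z + ((Real.sqrt (l ^ 2 + 1) - l : ℝ) : ℂ)) /
            (1 - ((Real.sqrt (l ^ 2 + 1) - l : ℝ) : ℂ) * z)))
      {z : ℂ | z.re < l ∧ 1 / (2 * l) < ‖z + 1 / (2 * l)‖}
      {w : ℂ | 1 < ‖w‖ ∧
        ‖w‖ < 1 / (Real.sqrt (l ^ 2 + 1) - l) ^ 2} := by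
  set s := √(l ^ 2 + 1) - l
  have hs : 0 < s := sqrt_sq_add_one_sub_pos l
  have hkey : s ^ 2 + 2 * l * s = 1 := sqrt_sq_add_one_sub_sq_add l
  have hden {z : ℂ} (hz : z.re < l) : 1 - s * z ≠ 0 := one_sub_mul_ne_zero_of_re_lt hkey hs hz
  refine ⟨hs, sqrt_sq_add_one_sub_lt_one hl,
    fun z hz ↦ (differentiableAt_moebius (hden hz.1)).differentiableWithinAt, ?_⟩
  refine Set.InvOn.bijOn (f' := moebiusInv s)
    ⟨fun z hz ↦ moebiusInv_moebius hs.ne' (hden hz.1),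
      fun w hw ↦ moebius_moebiusInv hs.ne' (one_add_sq_mul_ne_zero hs hw.2)⟩ ?_ ?_
  · rintro z ⟨hre, hcirc⟩
    exact ⟨(one_lt_norm_moebius_iff hkey hs (hden hre)).2
        ((one_div_two_mul_lt_norm_add_iff hl z).1 hcirc),
      (norm_moebius_lt_iff hkey hs (hden hre)).2 hre⟩
  · rintro w ⟨hw₁, hw₂⟩
    have hw := one_add_sq_mul_ne_zero hs hw₂
    have hz := one_sub_mul_moebiusInv_ne_zero hw
    rw [← moebius_moebiusInv hs.ne' hw] at hw₁ hw₂
    exact ⟨(norm_moebius_lt_iff hkey hs hz).1 hw₂,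
      (one_div_two_mul_lt_norm_add_iff hl _).2 ((one_lt_norm_moebius_iff hkey hs hz).1 hw₁)⟩
end
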